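/- Multi-tier preservation of composition: suppose the students of a school choice problem P are partitioned into nonempty tiers T_1, …, T_K such that for all k < l, every student in T_k has higher priority than every student in T_l at every school (i ▷_s j for all i ∈ T_k, j ∈ T_l, s ∈ S). Then for every stable-dominating matching ν, every school s ∈ S, and every tier index k, |ν⁻¹(s) ∩ T_k| = |DA⁻¹_s(P) ∩ T_k|. -/

import Mathlib

/-!
A school choice problem: finitely many students `I` and schools `S`
(with a distinguished null school of quota `|I|`).  Each student `i` has a
strict preference over schools represented by its rank function
`rk i : S → ℕ` (a bijection onto `{1, …, |S|}`, where rank 1 is the most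
preferred school); each school `s` has a quota `quota s ≥ 1` and a strict
priority over students represented by `prio s : I → ℕ`
(`i ▷_s j` iff `prio s i < prio s j`).
-/
structure SchoolChoice (I S : Type) [Fintype I] [Fintype S]
    [DecidableEq I] [DecidableEq S] where
  nullSchool : S
  quota : S → ℕ
  rk : I → S → ℕ
  prio : S → I → ℕ
  quota_pos : ∀ s : S, 1 ≤ quota s
  quota_null : quota nullSchool = Fintype.card I
  rk_inj : ∀ i : I, Function.Injective (rk i)
  rk_mem : ∀ (i : I) (s : S), rk i s ∈ Finset.Icc 1 (Fintype.card S)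
  prio_inj : ∀ s : S, Function.Injective (prio s)

namespace SchoolChoice

open scoped Classical

variable {I S : Type} [Fintype I] [Fintype S] [DecidableEq I] [DecidableEq S]

/-- `μ` is a matching: no school is assigned more students than its quota. -/
def IsMatching (P : SchoolChoice I S) (μ : I → S) : Prop :=
  ∀ s : S, (Finset.univ.filter fun i => μ i = s).card ≤ P.quota s

/-- Given the sets `R i` of schools that have rejected student `i` so far,
student `i` proposes to her most preferred school that has not rejected her. -/
noncomputable def propose (P : SchoolChoice I S) (R : I → Finset S) (i : I) : S :=
  if h : (Finset.univ \ R i).Nonempty then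
    (Finset.exists_min_image (Finset.univ \ R i) (P.rk i) h).choose
  else P.nullSchool

/-- At the DA round with rejection state `R`, school `s` rejects student `i`:
`i` applies to `s` and at least `quota s` applicants to `s` have higher priority. -/
def rejectsAt (P : SchoolChoice I S) (R : I → Finset S) (s : S) (i : I) : Prop :=
  P.propose R i = s ∧
    P.quota s ≤ (Finset.univ.filter fun j =>
      P.propose R j = s ∧ P.prio s j < P.prio s i).card

/-- One round of student-proposing Deferred Acceptance: record new rejections. -/
noncomputable def stepR (P : SchoolChoice I S) (R : I → Finset S) : I → Finset S :=
  fun i => R i ∪ (Finset.univ.filter fun s => P.rejectsAt R s i)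

/-- Rejection state after `n` rounds of Deferred Acceptance. -/
noncomputable def daR (P : SchoolChoice I S) : ℕ → I → Finset S
  | 0 => fun _ => (∅ : Finset S)
  | n + 1 => P.stepR (P.daR n)

/-- The outcome of the student-proposing Deferred Acceptance algorithm:
iterate rounds until no rejection occurs (which happens within
`|I|·|S| + 1` rounds); each student is matched to the school holding her. -/
noncomputable def DA (P : SchoolChoice I S) : I → S :=
  P.propose (P.daR (Fintype.card I * Fintype.card S + 1))

/-- A matching `ν` is stable-dominating if every student weakly prefers
`ν` to the DA outcome. -/
def StableDominating (P : SchoolChoice I S) (ν : I → S) : Prop :=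
  P.IsMatching ν ∧ ∀ i : I, P.rk i (ν i) ≤ P.rk i (P.DA i)

/-- Student `i` is unimprovable: every stable-dominating matching assigns `i`
to her DA school. -/
def Unimprovable (P : SchoolChoice I S) (i : I) : Prop :=
  ∀ ν : I → S, P.StableDominating ν → ν i = P.DA i

/-- Edge of the envy digraph `G^DA(P)`: `i` prefers `j`'s DA school to her own. -/
def Envy (P : SchoolChoice I S) (i j : I) : Prop :=
  P.rk i (P.DA j) < P.rk i (P.DA i)

/-- Student `i` lies on a directed cycle of the envy digraph `G^DA(P)`. -/
def OnCycle (P : SchoolChoice I S) (i : I) : Prop :=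
  ∃ (m : ℕ) (c : ℕ → I), 0 < m ∧ c 0 = i ∧ c m = i ∧
    ∀ k < m, P.Envy (c k) (c (k + 1))

/-- Student `i` desires school `s` in matching `μ`. -/
def Desires (P : SchoolChoice I S) (μ : I → S) (i : I) (s : S) : Prop :=
  P.rk i s < P.rk i (μ i)

/-- `μ` is non-wasteful: every desired school is filled to quota. -/
def NonWasteful (P : SchoolChoice I S) (μ : I → S) : Prop :=
  ∀ s : S, (∃ i : I, P.Desires μ i s) →
    (Finset.univ.filter fun i => μ i = s).card = P.quota s

/-- `μ` is stable: a non-wasteful matching with no priority violations. -/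
def Stable (P : SchoolChoice I S) (μ : I → S) : Prop :=
  P.IsMatching μ ∧ P.NonWasteful μ ∧
    ¬ ∃ (i j : I) (s : S), P.Desires μ i s ∧ μ j = s ∧ P.prio s i < P.prio s j

/-- `μ` Pareto-dominates `ν`. -/
def ParetoDominates (P : SchoolChoice I S) (μ ν : I → S) : Prop :=
  (∀ i : I, P.rk i (μ i) ≤ P.rk i (ν i)) ∧ ∃ i : I, P.rk i (μ i) < P.rk i (ν i)

/-- `μ` is a Pareto-efficient matching. -/
def ParetoEfficient (P : SchoolChoice I S) (μ : I → S) : Prop :=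
  P.IsMatching μ ∧ ∀ ν : I → S, P.IsMatching ν → ¬ P.ParetoDominates ν μ

end SchoolChoice

/-!
Fix a set `C` of students that is closed upwards under every school's priority, such as the union
of the first few tiers. If a stable-dominating `ν` moves a student `i ∈ C` to a school `t` she
prefers to her DA school, then `t` rejected `i` during DA, and the students holding `t` at the end
of DA all have higher priority than `i`, so they lie in `C` and fill `t`'s quota. Hence `ν` never
places more students of `C` at a school than DA does, and as both matchings place all of `C`, the
counts agree at every school. Tier `k` is the difference of two such sets.
-/

theorem Finset.le_card_filter_card_filter_lt_lt {α β : Type*} [LinearOrder β] (A : Finset α)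
    (g : α → β) {q : ℕ} (hq : q ≤ A.card) :
    q ≤ (A.filter fun j => (A.filter fun x => g x < g j).card < q).card := by
  classical
  set B := A.filter fun j => (A.filter fun x => g x < g j).card < q
  by_contra! hB
  obtain ⟨j, hj, hmin⟩ :=
    (A \ B).exists_min_image g (Finset.sdiff_nonempty_of_card_lt_card (hB.trans_le hq))
  have hbelow : A.filter (fun x => g x < g j) ⊆ B := by
    intro x hx
    rw [Finset.mem_filter] at hx
    by_contra hxB
    exact (hmin x (Finset.mem_sdiff.2 ⟨hx.1, hxB⟩)).not_gt hx.2
  rw [Finset.mem_sdiff] at hj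
  exact hj.2 (Finset.mem_filter.2 ⟨hj.1, (Finset.card_le_card hbelow).trans_lt hB⟩)

namespace SchoolChoice

variable {I S : Type} [Fintype I] [Fintype S] [DecidableEq I] [DecidableEq S]
  (P : SchoolChoice I S)

theorem propose_spec {R : I → Finset S} {i : I} (h : P.nullSchool ∉ R i) :
    P.propose R i ∉ R i ∧ ∀ s ∉ R i, P.rk i (P.propose R i) ≤ P.rk i s := by
  have hne : (Finset.univ \ R i).Nonempty := ⟨P.nullSchool, by simpa using h⟩
  obtain ⟨hmem, hmin⟩ := ((Finset.univ \ R i).exists_min_image (P.rk i) hne).choose_spec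
  rw [propose, dif_pos hne]
  exact ⟨(Finset.mem_sdiff.1 hmem).2, fun s hs => hmin s (by simpa using hs)⟩

theorem propose_eq_of_subset {R R' : I → Finset S} {i : I} (hRR' : R i ⊆ R' i)
    (hnull : P.nullSchool ∉ R' i) (h : P.propose R i ∉ R' i) :
    P.propose R' i = P.propose R i := by
  have hnull' : P.nullSchool ∉ R i := fun hR => hnull (hRR' hR)
  refine P.rk_inj i (le_antisymm ((P.propose_spec hnull).2 _ h) ?_)
  exact (P.propose_spec hnull').2 _ fun hR => (P.propose_spec hnull).1 (hRR' hR)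

theorem mem_stepR {R : I → Finset S} {i : I} {s : S} :
    s ∈ P.stepR R i ↔ s ∈ R i ∨ P.rejectsAt R s i := by
  simp [stepR]

theorem not_rejectsAt_nullSchool (R : I → Finset S) (i : I) :
    ¬ P.rejectsAt R P.nullSchool i := by
  rintro ⟨-, hq⟩
  rw [P.quota_null, ← Finset.card_univ] at hq
  refine hq.not_gt (Finset.card_lt_card (Finset.filter_ssubset.2 ⟨i, Finset.mem_univ i, ?_⟩))
  simp

theorem nullSchool_not_mem_stepR {R : I → Finset S} (hR : ∀ j, P.nullSchool ∉ R j) (i : I) :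
    P.nullSchool ∉ P.stepR R i := by
  rw [mem_stepR, not_or]
  exact ⟨hR i, P.not_rejectsAt_nullSchool R i⟩

theorem nullSchool_not_mem_daR (n : ℕ) (i : I) : P.nullSchool ∉ P.daR n i := by
  induction n generalizing i with
  | zero => simp [daR]
  | succ n ih => exact P.nullSchool_not_mem_stepR ih i

noncomputable def higherApplicants (R : I → Finset S) (s : S) (p : ℕ) : Finset I :=
  Finset.univ.filter fun j => P.propose R j = s ∧ P.prio s j < p

/-- The top `quota s` students of `higherApplicants R s p` are not rejected by `s`, so they apply
to `s` again in the next round. -/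
theorem quota_le_card_higherApplicants_stepR {R : I → Finset S} (hR : ∀ j, P.nullSchool ∉ R j)
    {s : S} {p : ℕ} (h : P.quota s ≤ (P.higherApplicants R s p).card) :
    P.quota s ≤ (P.higherApplicants (P.stepR R) s p).card := by
  set A := P.higherApplicants R s p
  refine (Finset.le_card_filter_card_filter_lt_lt A (P.prio s) h).trans (Finset.card_le_card ?_)
  intro j hj
  obtain ⟨hjA, hfew⟩ := Finset.mem_filter.1 hj
  obtain ⟨hprop, hjp⟩ := (Finset.mem_filter.1 hjA).2
  have hnotrej : ¬ P.rejectsAt R s j := by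
    rintro ⟨-, hq⟩
    refine hfew.not_ge (hq.trans (Finset.card_le_card fun x hx => ?_))
    rw [Finset.mem_filter] at hx ⊢
    exact ⟨Finset.mem_filter.2 ⟨hx.1, hx.2.1, hx.2.2.trans hjp⟩, hx.2.2⟩
  have hnotmem : s ∉ P.stepR R j := by
    rw [mem_stepR, not_or]
    exact ⟨hprop ▸ (P.propose_spec (hR j)).1, hnotrej⟩
  have hstay : P.propose (P.stepR R) j = s :=
    (P.propose_eq_of_subset Finset.subset_union_left (P.nullSchool_not_mem_stepR hR j)
      (hprop ▸ hnotmem)).trans hprop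
  exact Finset.mem_filter.2 ⟨Finset.mem_univ j, hstay, hjp⟩

theorem quota_le_card_higherApplicants_of_mem_daR {m : ℕ} {i : I} {s : S}
    (h : s ∈ P.daR m i) : P.quota s ≤ (P.higherApplicants (P.daR m) s (P.prio s i)).card := by
  induction m with
  | zero => simp [daR] at h
  | succ m ih =>
    refine P.quota_le_card_higherApplicants_stepR (P.nullSchool_not_mem_daR m) ?_
    rcases P.mem_stepR.1 h with hmem | hrej
    · exact ih hmem
    · exact hrej.2

theorem quota_le_card_DA_prio_lt_of_desires {i : I} {s : S} (h : P.Desires P.DA i s) :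
    P.quota s ≤ (Finset.univ.filter fun j => P.DA j = s ∧ P.prio s j < P.prio s i).card := by
  have hmem : s ∈ P.daR (Fintype.card I * Fintype.card S + 1) i := by
    by_contra hs
    exact (P.propose_spec (P.nullSchool_not_mem_daR _ i)).2 s hs |>.not_gt h
  exact P.quota_le_card_higherApplicants_of_mem_daR hmem

def IsPriorityUpperSet (C : Finset I) : Prop :=
  ∀ (s : S) (i j : I), i ∈ C → P.prio s j < P.prio s i → j ∈ C

section PriorityUpperSet

variable {P} {ν : I → S} (hν : P.StableDominating ν) {C : Finset I} (hC : P.IsPriorityUpperSet C)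
include hν hC

theorem card_filter_le_card_filter_DA (t : S) :
    (C.filter fun i => ν i = t).card ≤ (C.filter fun i => P.DA i = t).card := by
  by_cases hmove : ∃ i ∈ C, ν i = t ∧ P.DA i ≠ t
  · obtain ⟨i, hiC, rfl, hne⟩ := hmove
    have hdes : P.Desires P.DA i (ν i) :=
      (hν.2 i).lt_of_ne fun h => hne (P.rk_inj i h).symm
    calc (C.filter fun j => ν j = ν i).card
        ≤ (Finset.univ.filter fun j => ν j = ν i).card :=
          Finset.card_le_card (Finset.filter_subset_filter _ (Finset.subset_univ C))
      _ ≤ P.quota (ν i) := hν.1 _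
      _ ≤ (Finset.univ.filter fun j => P.DA j = ν i ∧ P.prio (ν i) j < P.prio (ν i) i).card :=
          P.quota_le_card_DA_prio_lt_of_desires hdes
      _ ≤ _ := Finset.card_le_card fun j hj => by
          rw [Finset.mem_filter] at hj ⊢
          exact ⟨hC _ i j hiC hj.2.2, hj.2.1⟩
  · push Not at hmove
    exact Finset.card_le_card fun j hj => by
      rw [Finset.mem_filter] at hj ⊢
      exact ⟨hj.1, hmove j hj.1 hj.2⟩

theorem card_filter_eq_card_filter_DA (t : S) :
    (C.filter fun i => ν i = t).card = (C.filter fun i => P.DA i = t).card := by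
  have hsum (μ : I → S) : ∑ t, (C.filter fun i => μ i = t).card = C.card :=
    (Finset.card_eq_sum_card_fiberwise fun i _ => Finset.mem_univ (μ i)).symm
  exact (Finset.sum_eq_sum_iff_of_le fun t _ => card_filter_le_card_filter_DA hν hC t).1
    ((hsum ν).trans (hsum P.DA).symm) t (Finset.mem_univ t)

end PriorityUpperSet

theorem card_filter_sdiff_eq_card_filter_DA {ν : I → S} (hν : P.StableDominating ν)
    {C C' : Finset I} (hC : P.IsPriorityUpperSet C) (hC' : P.IsPriorityUpperSet C')
    (hsub : C' ⊆ C) (t : S) :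
    ((C \ C').filter fun i => ν i = t).card = ((C \ C').filter fun i => P.DA i = t).card := by
  have hcard (μ : I → S) : ((C \ C').filter fun i => μ i = t).card
      = (C.filter fun i => μ i = t).card - (C'.filter fun i => μ i = t).card := by
    rw [← Finset.card_sdiff_of_subset (Finset.filter_subset_filter _ hsub)]
    congr 1
    ext i
    simp only [Finset.mem_filter, Finset.mem_sdiff]
    tauto
  rw [hcard, hcard, card_filter_eq_card_filter_DA hν hC, card_filter_eq_card_filter_DA hν hC']

theorem isPriorityUpperSet_biUnion {ι : Type*} [LinearOrder ι] {T : ι → Finset I}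
    (hcover : ∀ i : I, ∃ k, i ∈ T k)
    (hprio : ∀ (s : S) (k l : ι), k < l → ∀ i ∈ T k, ∀ j ∈ T l, P.prio s i < P.prio s j)
    {L : Finset ι} (hL : ∀ l ∈ L, ∀ m ≤ l, m ∈ L) : P.IsPriorityUpperSet (L.biUnion T) := by
  intro s i j hi hji
  obtain ⟨l, hl, hil⟩ := Finset.mem_biUnion.1 hi
  obtain ⟨m, hjm⟩ := hcover j
  refine Finset.mem_biUnion.2 ⟨m, hL l hl m (not_lt.1 fun hlm => ?_), hjm⟩
  exact lt_asymm hji (hprio s l m hlm i hil j hjm)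

end SchoolChoice

theorem Finset.eq_biUnion_Iic_sdiff_biUnion_Iio {ι α : Type*} [LinearOrder ι]
    [LocallyFiniteOrderBot ι] [DecidableEq α] {T : ι → Finset α}
    (hdisj : ∀ k l, k < l → Disjoint (T k) (T l)) (k : ι) :
    T k = (Iic k).biUnion T \ (Iio k).biUnion T := by
  ext i
  simp only [mem_sdiff, mem_biUnion, mem_Iic, mem_Iio, not_exists, not_and]
  refine ⟨fun hi => ⟨⟨k, le_rfl, hi⟩, fun l hlk hil => disjoint_left.1 (hdisj l k hlk) hil hi⟩, ?_⟩
  rintro ⟨⟨l, hlk, hil⟩, hnot⟩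
  obtain rfl : l = k := hlk.eq_of_not_lt fun hlt => hnot l hlt hil
  exact hil

theorem multitier_composition_preservation_general {I S : Type} [Fintype I] [Fintype S]
    [DecidableEq I] [DecidableEq S] (P : SchoolChoice I S)
    (K : ℕ) (T : Fin K → Finset I)
    (hcover : ∀ i : I, ∃ k : Fin K, i ∈ T k)
    (hprio : ∀ (s : S) (k l : Fin K), k < l →
      ∀ i ∈ T k, ∀ j ∈ T l, P.prio s i < P.prio s j)
    (ν : I → S) (hν : P.StableDominating ν) (s : S) (k : Fin K) :
    (Finset.univ.filter fun i => ν i = s ∧ i ∈ T k).card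
      = (Finset.univ.filter fun i => P.DA i = s ∧ i ∈ T k).card := by
  have hsep : ∀ k l : Fin K, k < l → Disjoint (T k) (T l) := fun k l hkl =>
    Finset.disjoint_left.2 fun i hk hl => lt_irrefl _ (hprio P.nullSchool k l hkl i hk i hl)
  have hupper (L : Finset (Fin K)) (hL : ∀ l ∈ L, ∀ m ≤ l, m ∈ L) :
      P.IsPriorityUpperSet (L.biUnion T) :=
    P.isPriorityUpperSet_biUnion hcover hprio hL
  have htier := P.card_filter_sdiff_eq_card_filter_DA hν (C := (Finset.Iic k).biUnion T)
    (hupper _ fun _ hl _ hm => Finset.mem_Iic.2 (hm.trans (Finset.mem_Iic.1 hl)))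
    (hupper _ fun _ hl _ hm => Finset.mem_Iio.2 (hm.trans_lt (Finset.mem_Iio.1 hl)))
    (Finset.biUnion_subset_biUnion_of_subset_left T Finset.Iio_subset_Iic_self) s
  rw [← Finset.eq_biUnion_Iic_sdiff_biUnion_Iio hsep k] at htier
  have hfilter (μ : I → S) :
      (Finset.univ.filter fun i => μ i = s ∧ i ∈ T k) = (T k).filter fun i => μ i = s := by
    ext i
    simp [and_comm]
  rw [hfilter, hfilter, htier]

/-- Multi-tier preservation of composition: if the students are
partitioned into nonempty tiers `T 1, …, T K` such that every student of a
lower-indexed tier has higher priority than every student of a higher-indexed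
tier at every school, then for every stable-dominating matching `ν`, every
school `s` and every tier `k`, the number of students of tier `k` at `s` is
the same as under DA. -/
theorem multitier_composition_preservation {I S : Type} [Fintype I] [Fintype S]
    [DecidableEq I] [DecidableEq S] (P : SchoolChoice I S)
    (K : ℕ) (T : Fin K → Finset I)
    (hne : ∀ k : Fin K, (T k).Nonempty)
    (hdisj : ∀ k l : Fin K, k ≠ l → Disjoint (T k) (T l))
    (hcover : ∀ i : I, ∃ k : Fin K, i ∈ T k)
    (hprio : ∀ (s : S) (k l : Fin K), k < l →
      ∀ i ∈ T k, ∀ j ∈ T l, P.prio s i < P.prio s j)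
    (ν : I → S) (hν : P.StableDominating ν) (s : S) (k : Fin K) :
    (Finset.univ.filter fun i => ν i = s ∧ i ∈ T k).card
      = (Finset.univ.filter fun i => P.DA i = s ∧ i ∈ T k).card :=
  multitier_composition_preservation_general P K T hcover hprio ν hν s k
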